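/- arXiv:2012.07638 — 4 statements merged into one kernel-verified Lean document; each statement's English description precedes it below -/
import Mathlib

section
/- If f ∈ 𝒰 (f analytic on 𝔻, f(0)=0, f'(0)=1, |(z/f(z))² f'(z) − 1| < 1 on 𝔻), then Re(2·z·f'(z)/f(z) − z·f''(z)/f'(z)) > 0 for all |z| < r₁, where r₁ ∈ (0,1) is the root of r³ + 2r² − 2 = 0 (r₁ ≈ 0.839). -/
/-!
Write `(z / f z) ^ 2 * f' z = 1 + W z`. With `g = z / f` (analytic, `g 0 = 1`) one has
`W = g - z g' - 1`, so `W` is analytic on the disc with `|W| < 1` and `W 0 = W' 0 = 0`; by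
Schwarz's lemma `W = z² ψ` with `|ψ| ≤ 1`. Taking logarithmic derivatives,
`D(f; z) = 2 - z W' / (1 + W) = (2 - z³ ψ') / (1 + z² ψ)`. Schwarz–Pick gives
`|ψ'| (1 - r²) ≤ 1 - |ψ|²`, and `(1 - |ψ|²) |1 + W| ≤ Re (1 + W)` because `|W| ≤ |ψ|`. Hence
`|z³ ψ'| |1 + W| ≤ r³ / (1 - r²) · Re (1 + W)`, which is `< 2 Re (1 + W)` exactly when
`r³ + 2 r² < 2`, and then `Re D > 0`.
-/

open Complex Metric ComplexConjugate Topology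

noncomputable def mobius (c u : ℂ) : ℂ := (c - u) / (1 - conj c * u)

lemma one_sub_conj_mul_ne_zero {c u : ℂ} (hc : ‖c‖ < 1) (hu : ‖u‖ < 1) :
    1 - conj c * u ≠ 0 := by
  have : ‖conj c * u‖ < 1 := by
    rw [norm_mul, RCLike.norm_conj]
    exact mul_lt_one_of_nonneg_of_lt_one_left (norm_nonneg _) hc hu.le
  intro h
  rw [sub_eq_zero] at h
  simp [← h] at this

lemma norm_mobius_lt_one {c u : ℂ} (hc : ‖c‖ < 1) (hu : ‖u‖ < 1) : ‖mobius c u‖ < 1 := by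
  have hden := one_sub_conj_mul_ne_zero hc hu
  rw [mobius, norm_div, div_lt_one (norm_pos_iff.2 hden), ← sq_lt_sq₀ (norm_nonneg _)
    (norm_nonneg _), Complex.sq_norm, Complex.sq_norm]
  have key : normSq (1 - conj c * u) - normSq (c - u) = (1 - ‖c‖ ^ 2) * (1 - ‖u‖ ^ 2) := by
    simp only [← normSq_eq_norm_sq, normSq_apply, sub_re, sub_im, mul_re, mul_im, conj_re,
      conj_im, one_re, one_im]
    ring
  have hc2 : ‖c‖ ^ 2 < 1 := by nlinarith [norm_nonneg c]
  have hu2 : ‖u‖ ^ 2 < 1 := by nlinarith [norm_nonneg u]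
  nlinarith [mul_pos (sub_pos.2 hc2) (sub_pos.2 hu2)]

lemma hasDerivAt_mobius {c u : ℂ} (h : 1 - conj c * u ≠ 0) :
    HasDerivAt (mobius c) ((conj c * c - 1) / (1 - conj c * u) ^ 2) u := by
  refine (((hasDerivAt_id u).const_sub c).div
    (((hasDerivAt_id u).const_mul (conj c)).const_sub 1) h).congr_deriv ?_
  simp only [id]
  ring

lemma schwarz_pick_of_mapsTo_ball {ψ : ℂ → ℂ} (hd : DifferentiableOn ℂ ψ (ball 0 1))
    (hmaps : Set.MapsTo ψ (ball 0 1) (ball 0 1)) {z : ℂ} (hz : z ∈ ball 0 1) :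
    ‖deriv ψ z‖ * (1 - ‖z‖ ^ 2) ≤ 1 - ‖ψ z‖ ^ 2 := by
  set a := ψ z
  have hz1 : ‖z‖ < 1 := mem_ball_zero_iff.1 hz
  have ha1 : ‖a‖ < 1 := mem_ball_zero_iff.1 (hmaps hz)
  have hmob : ∀ {c}, ‖c‖ < 1 → Set.MapsTo (mobius c) (ball 0 1) (ball 0 1) := fun hc u hu =>
    mem_ball_zero_iff.2 (norm_mobius_lt_one hc (mem_ball_zero_iff.1 hu))
  have hmobd : ∀ {c u : ℂ}, ‖c‖ < 1 → u ∈ ball (0 : ℂ) 1 → HasDerivAt (mobius c)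
      ((conj c * c - 1) / (1 - conj c * u) ^ 2) u := fun hc hu =>
    hasDerivAt_mobius (one_sub_conj_mul_ne_zero hc (mem_ball_zero_iff.1 hu))
  have hψd : ∀ {u}, u ∈ ball (0 : ℂ) 1 → DifferentiableAt ℂ ψ u := fun hu =>
    hd.differentiableAt (isOpen_ball.mem_nhds hu)
  let F := mobius a ∘ ψ ∘ mobius z
  have hF : Set.MapsTo F (ball 0 1) (ball 0 1) := (hmob ha1).comp (hmaps.comp (hmob hz1))
  have hF0 : F 0 = 0 := by simp [F, mobius, a]
  have hFd : DifferentiableOn ℂ F (ball 0 1) := fun u hu =>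
    ((hmobd ha1 (hmaps (hmob hz1 hu))).differentiableAt.comp u
      ((hψd (hmob hz1 hu)).comp u (hmobd hz1 hu).differentiableAt)).differentiableWithinAt
  have hmz0 : mobius z 0 = z := by simp [mobius]
  have hF' : HasDerivAt F ((conj a * a - 1) / (1 - conj a * a) ^ 2 *
      (deriv ψ z * ((conj z * z - 1) / (1 - conj z * 0) ^ 2))) 0 :=
    (hmobd ha1 (hmaps hz)).comp_of_eq 0
      ((hψd hz).hasDerivAt.comp_of_eq 0 (hmobd hz1 (mem_ball_self one_pos)) hmz0.symm)
      (by simp [hmz0])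
  have hF'0 : deriv F 0 = ((1 - ‖z‖ ^ 2) / (1 - ‖a‖ ^ 2) : ℝ) * deriv ψ z := by
    have : (1 : ℝ) - ‖a‖ ^ 2 ≠ 0 := by nlinarith [norm_nonneg a]
    have : (1 : ℂ) - ‖a‖ ^ 2 ≠ 0 := by exact_mod_cast this
    rw [hF'.deriv, conj_mul', conj_mul']
    push_cast
    field_simp
    ring
  have hschwarz : ‖deriv F 0‖ ≤ 1 :=
    norm_deriv_le_one_of_mapsTo_ball hFd (by rw [hF0]; exact hF.mono_right ball_subset_closedBall)
      one_pos
  have hz2 : 0 < 1 - ‖z‖ ^ 2 := by nlinarith [norm_nonneg z]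
  have ha2 : 0 < 1 - ‖a‖ ^ 2 := by nlinarith [norm_nonneg a]
  rw [hF'0, norm_mul, Complex.norm_real, Real.norm_of_nonneg (by positivity),
    div_mul_eq_mul_div, div_le_one ha2] at hschwarz
  linarith

lemma schwarz_pick {ψ : ℂ → ℂ} (hd : DifferentiableOn ℂ ψ (ball 0 1))
    (hmaps : Set.MapsTo ψ (ball 0 1) (closedBall 0 1)) {z : ℂ} (hz : z ∈ ball 0 1) :
    ‖deriv ψ z‖ * (1 - ‖z‖ ^ 2) ≤ 1 - ‖ψ z‖ ^ 2 := by
  by_cases hopen : Set.MapsTo ψ (ball 0 1) (ball 0 1)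
  · exact schwarz_pick_of_mapsTo_ball hd hopen hz
  -- a point where `‖ψ‖ = 1` is an interior maximum of `‖ψ‖`, so `ψ` is constant
  obtain ⟨u, hu, hψu⟩ : ∃ u ∈ ball (0 : ℂ) 1, ‖ψ u‖ = 1 := by
    simp only [Set.MapsTo, not_forall] at hopen
    obtain ⟨u, hu, hψu⟩ := hopen
    exact ⟨u, hu, le_antisymm (mem_closedBall_zero_iff.1 (hmaps hu))
      (not_lt.1 (mt mem_ball_zero_iff.2 hψu))⟩
  have hconst : Set.EqOn ψ (Function.const ℂ (ψ u)) (ball 0 1) :=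
    eqOn_of_isPreconnected_of_isMaxOn_norm (convex_ball 0 1).isPreconnected isOpen_ball hd hu
      fun v hv => by simpa [hψu] using mem_closedBall_zero_iff.1 (hmaps hv)
  have hderiv : deriv ψ z = 0 := by
    rw [Filter.EventuallyEq.deriv_eq (f := fun _ => ψ u)
      (Filter.eventually_of_mem (isOpen_ball.mem_nhds hz) hconst), deriv_const]
  simp [hderiv, hconst hz, hψu]

lemma mapsTo_dslope_ball_closedBall {g : ℂ → ℂ} (hd : DifferentiableOn ℂ g (ball 0 1))
    (hmaps : Set.MapsTo g (ball 0 1) (closedBall 0 1)) (hg0 : g 0 = 0) :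
    Set.MapsTo (dslope g 0) (ball 0 1) (closedBall 0 1) := by
  intro z hz
  rw [mem_closedBall_zero_iff]
  have hbound : ∀ R ∈ Set.Ioo ‖z‖ 1, ‖dslope g 0 z‖ ≤ 1 / R := fun R hR =>
    norm_dslope_le_div_of_mapsTo_ball (hd.mono (ball_subset_ball hR.2.le))
      (by rw [hg0]; exact hmaps.mono_left (ball_subset_ball hR.2.le)) (mem_ball_zero_iff.2 hR.1)
  have hlim : Filter.Tendsto (fun R : ℝ => 1 / R) (𝓝[<] 1) (𝓝 1) := by
    simpa using (continuousAt_inv₀ (one_ne_zero (α := ℝ))).tendsto.mono_left nhdsWithin_le_nhds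
  exact ge_of_tendsto hlim
    (Filter.eventually_of_mem (Ioo_mem_nhdsLT (mem_ball_zero_iff.1 hz)) hbound)

lemma eq_mul_dslope_of_eq_zero {g : ℂ → ℂ} (hg0 : g 0 = 0) (z : ℂ) :
    g z = z * dslope g 0 z := by
  simpa [hg0] using (sub_smul_dslope g 0 z).symm

lemma exists_eq_sq_mul_of_mapsTo_ball {W : ℂ → ℂ} (hd : DifferentiableOn ℂ W (ball 0 1))
    (hmaps : Set.MapsTo W (ball 0 1) (closedBall 0 1)) (hW0 : W 0 = 0) (hW'0 : deriv W 0 = 0) :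
    ∃ ψ : ℂ → ℂ, DifferentiableOn ℂ ψ (ball 0 1) ∧ Set.MapsTo ψ (ball 0 1) (closedBall 0 1) ∧
      ∀ z, W z = z ^ 2 * ψ z := by
  have hnhds : ball (0 : ℂ) 1 ∈ 𝓝 0 := ball_mem_nhds 0 one_pos
  have hd₁ : DifferentiableOn ℂ (dslope W 0) (ball 0 1) := (differentiableOn_dslope hnhds).2 hd
  have hW₁0 : dslope W 0 0 = 0 := by rw [dslope_same, hW'0]
  refine ⟨dslope (dslope W 0) 0, (differentiableOn_dslope hnhds).2 hd₁,
    mapsTo_dslope_ball_closedBall hd₁ (mapsTo_dslope_ball_closedBall hd hmaps hW0) hW₁0,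
    fun z => ?_⟩
  rw [eq_mul_dslope_of_eq_zero hW0, eq_mul_dslope_of_eq_zero hW₁0]
  ring

lemma exists_differentiableOn_eq_sq_div_mul_deriv_sub_one {f : ℂ → ℂ}
    (hf : DifferentiableOn ℂ f (ball 0 1)) (hf0 : f 0 = 0) (hf'0 : deriv f 0 = 1)
    (hne : ∀ z ∈ ball (0 : ℂ) 1, z ≠ 0 → f z ≠ 0) :
    ∃ W : ℂ → ℂ, DifferentiableOn ℂ W (ball 0 1) ∧ W 0 = 0 ∧ deriv W 0 = 0 ∧
      ∀ z ∈ ball (0 : ℂ) 1, z ≠ 0 → W z = (z / f z) ^ 2 * deriv f z - 1 := by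
  set h := dslope f 0
  have hfh : ∀ z, f z = z * h z := eq_mul_dslope_of_eq_zero hf0
  have hh0 : h 0 = 1 := by simp only [h, dslope_same, hf'0]
  have hh : ∀ z ∈ ball (0 : ℂ) 1, h z ≠ 0 := by
    intro z hz
    rcases eq_or_ne z 0 with rfl | hz0
    · simp [hh0]
    · exact fun hhz => hne z hz hz0 (by rw [hfh, hhz, mul_zero])
  -- `g` is the analytic continuation of `z / f z` to `z = 0`
  set g := fun z => (h z)⁻¹
  have hgd : DifferentiableOn ℂ g (ball 0 1) :=
    ((differentiableOn_dslope (ball_mem_nhds 0 one_pos)).2 hf).inv hh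
  have hg'd : DifferentiableOn ℂ (deriv g) (ball 0 1) := hgd.deriv isOpen_ball
  have hfg : f = fun z => z / g z := funext fun z => by simp [g, hfh z]
  have hgat : ∀ z ∈ ball (0 : ℂ) 1, HasDerivAt g (deriv g z) z := fun z hz =>
    (hgd.differentiableAt (isOpen_ball.mem_nhds hz)).hasDerivAt
  have hg'at : HasDerivAt (deriv g) (deriv (deriv g) 0) 0 :=
    (hg'd.differentiableAt (ball_mem_nhds 0 one_pos)).hasDerivAt
  refine ⟨fun z => g z - z * deriv g z - 1, ?_, by simp [g, hh0], ?_, ?_⟩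
  · exact (hgd.sub (differentiableOn_id.mul hg'd)).sub_const 1
  · have := ((hgat 0 (mem_ball_self one_pos)).fun_sub
      ((hasDerivAt_id' 0).fun_mul hg'at)).sub_const 1
    rw [this.deriv]
    simp
  · intro z hz hz0
    have hgz : g z ≠ 0 := inv_ne_zero (hh z hz)
    have hf' : HasDerivAt f ((1 * g z - z * deriv g z) / g z ^ 2) z := by
      rw [hfg]; exact (hasDerivAt_id z).div (hgat z hz) hgz
    rw [hf'.deriv, hfg]
    field_simp

lemma ne_zero_of_norm_sq_div_mul_deriv_sub_one_lt {f : ℂ → ℂ} {z : ℂ}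
    (h : ‖(z / f z) ^ 2 * deriv f z - 1‖ < 1) : f z ≠ 0 ∧ deriv f z ≠ 0 := by
  have hq : (z / f z) ^ 2 * deriv f z ≠ 0 := fun hq => by simp [hq] at h
  obtain ⟨hq, hf'⟩ := mul_ne_zero_iff.1 hq
  exact ⟨(div_ne_zero_iff.1 ((pow_ne_zero_iff two_ne_zero).1 hq)).2, hf'⟩

lemma two_mul_sub_eq_two_sub_mul_logDeriv {f : ℂ → ℂ} {z : ℂ} (hz : z ≠ 0) (hfz : f z ≠ 0)
    (hf'z : deriv f z ≠ 0) (hf : DifferentiableAt ℂ f z) (hf' : DifferentiableAt ℂ (deriv f) z) :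
    2 * (z * deriv f z / f z) - z * deriv (deriv f) z / deriv f z =
      2 - z * logDeriv (fun w => (w / f w) ^ 2 * deriv f w) z := by
  have hdiv : DifferentiableAt ℂ (fun w => w / f w) z := differentiableAt_id.div hf hfz
  rw [logDeriv_mul (f := fun w => (w / f w) ^ 2) z (pow_ne_zero 2 (div_ne_zero hz hfz)) hf'z
      (hdiv.pow 2) hf', logDeriv_fun_pow hdiv,
    logDeriv_div (f := fun w => w) z hz hfz differentiableAt_id hf, logDeriv_id']
  simp only [logDeriv_apply]
  field_simp
  ring

lemma two_mul_sub_eq_div_of_eventuallyEq {f ψ : ℂ → ℂ} {z : ℂ} (hz : z ≠ 0) (hfz : f z ≠ 0)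
    (hf'z : deriv f z ≠ 0) (hf : DifferentiableAt ℂ f z) (hf' : DifferentiableAt ℂ (deriv f) z)
    (hψ : DifferentiableAt ℂ ψ z)
    (heq : (fun w => (w / f w) ^ 2 * deriv f w) =ᶠ[𝓝 z] fun w => 1 + w ^ 2 * ψ w) :
    2 * (z * deriv f z / f z) - z * deriv (deriv f) z / deriv f z =
      (2 - z ^ 3 * deriv ψ z) / (1 + z ^ 2 * ψ z) := by
  have hne : 1 + z ^ 2 * ψ z ≠ 0 := by
    rw [← heq.eq_of_nhds]
    exact mul_ne_zero (pow_ne_zero 2 (div_ne_zero hz hfz)) hf'z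
  have hderiv : HasDerivAt (fun w => 1 + w ^ 2 * ψ w) (2 * z * ψ z + z ^ 2 * deriv ψ z) z := by
    simpa using ((hasDerivAt_pow 2 z).fun_mul hψ.hasDerivAt).const_add 1
  rw [two_mul_sub_eq_two_sub_mul_logDeriv hz hfz hf'z hf hf',
    (logDeriv_congr_nhds heq).eq_of_nhds, logDeriv_apply, hderiv.deriv]
  field_simp
  ring

lemma re_div_pos_of_norm_mul_lt {c : ℝ} {e b : ℂ} (h : ‖e‖ * ‖b‖ < c * b.re) :
    0 < ((c - e) / b).re := by
  have hb : b ≠ 0 := by rintro rfl; simp at h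
  have hre : (e * conj b).re ≤ ‖e‖ * ‖b‖ := by
    simpa using re_le_norm (e * conj b)
  have : ((c - e) / b).re = (c * b.re - (e * conj b).re) / normSq b := by
    simp only [div_re, sub_re, sub_im, ofReal_re, ofReal_im, mul_re, conj_re, conj_im]
    ring
  rw [this]
  exact div_pos (by linarith) (normSq_pos.2 hb)

lemma one_sub_sq_mul_norm_one_add_le {w : ℂ} {s : ℝ} (hw : ‖w‖ ≤ s) (hs : s ≤ 1) :
    (1 - s ^ 2) * ‖1 + w‖ ≤ 1 + w.re := by
  have hs0 : 0 ≤ s := (norm_nonneg w).trans hw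
  have hre : -s ≤ w.re := by linarith [neg_abs_le w.re, abs_re_le_norm w]
  have hsq : ‖1 + w‖ ^ 2 = 1 + 2 * w.re + ‖w‖ ^ 2 := by
    simp only [Complex.sq_norm, normSq_apply, add_re, add_im, one_re, one_im]
    ring
  have hw2 : ‖w‖ ^ 2 ≤ s ^ 2 := pow_le_pow_left₀ (norm_nonneg w) hw 2
  rw [← sq_le_sq₀ (mul_nonneg (by nlinarith) (norm_nonneg _)) (by linarith), mul_pow, hsq]
  -- with `t = s²`, `y = 1 + re w`: `y² - (1-t)²(2y - 1 + t) = (y - (1-t)²)² + t(1-t)³`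
  nlinarith [sq_nonneg (1 + w.re - (1 - s ^ 2) ^ 2), mul_nonneg (sq_nonneg s)
    (pow_nonneg (sub_nonneg.2 (by nlinarith : s ^ 2 ≤ 1)) 3), sq_nonneg (1 - s ^ 2)]

lemma re_two_sub_div_pos {z ψ ψ' : ℂ} (hz : ‖z‖ ^ 3 < 2 * (1 - ‖z‖ ^ 2)) (hψ : ‖ψ‖ ≤ 1)
    (hψ' : ‖ψ'‖ * (1 - ‖z‖ ^ 2) ≤ 1 - ‖ψ‖ ^ 2) :
    0 < ((2 - z ^ 3 * ψ') / (1 + z ^ 2 * ψ)).re := by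
  set r := ‖z‖
  set W := z ^ 2 * ψ
  have hr2 : 0 < 1 - r ^ 2 := by nlinarith [norm_nonneg z, pow_nonneg (norm_nonneg z) 3]
  have hW : ‖W‖ ≤ ‖ψ‖ := by
    rw [norm_mul, norm_pow]
    exact mul_le_of_le_one_left (norm_nonneg ψ) (by linarith)
  have hWre : 0 < 1 + W.re := by
    have : ‖W‖ < 1 := by
      rw [norm_mul, norm_pow]
      exact mul_lt_one_of_nonneg_of_lt_one_left (by positivity) (by linarith) hψ
    linarith [neg_abs_le W.re, abs_re_le_norm W]
  have hmain : ‖z ^ 3 * ψ'‖ * ‖1 + W‖ * (1 - r ^ 2) ≤ r ^ 3 * (1 + W.re) :=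
    calc ‖z ^ 3 * ψ'‖ * ‖1 + W‖ * (1 - r ^ 2) = r ^ 3 * (‖ψ'‖ * (1 - r ^ 2)) * ‖1 + W‖ := by
          rw [norm_mul, norm_pow]; ring
      _ ≤ r ^ 3 * (1 - ‖ψ‖ ^ 2) * ‖1 + W‖ := by gcongr
      _ = r ^ 3 * ((1 - ‖ψ‖ ^ 2) * ‖1 + W‖) := by ring
      _ ≤ r ^ 3 * (1 + W.re) := by gcongr; exact one_sub_sq_mul_norm_one_add_le hW hψ
  have hcubic : r ^ 3 * (1 + W.re) < 2 * (1 + W.re) * (1 - r ^ 2) := by nlinarith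
  exact_mod_cast re_div_pos_of_norm_mul_lt (c := 2)
    (lt_of_mul_lt_mul_right (hmain.trans_lt hcubic) hr2.le)

lemma pow_three_lt_two_mul_one_sub_sq {r r₁ : ℝ} (hr : 0 ≤ r) (hr₁ : r < r₁)
    (hroot : r₁ ^ 3 + 2 * r₁ ^ 2 - 2 = 0) : r ^ 3 < 2 * (1 - r ^ 2) := by
  have h3 : r ^ 3 < r₁ ^ 3 := pow_lt_pow_left₀ hr₁ hr three_ne_zero
  have h2 : r ^ 2 < r₁ ^ 2 := pow_lt_pow_left₀ hr₁ hr two_ne_zero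
  linarith

theorem U_D_re_pos_general (f : ℂ → ℂ) (r₁ : ℝ)
    (hroot : r₁ ^ 3 + 2 * r₁ ^ 2 - 2 = 0)
    (hf : AnalyticOnNhd ℂ f (ball (0 : ℂ) 1))
    (hf0 : f 0 = 0) (hf'0 : deriv f 0 = 1)
    (hU : ∀ z ∈ ball (0 : ℂ) 1, z ≠ 0 →
      ‖(z / f z) ^ 2 * deriv f z - 1‖ < 1) :
    ∀ z : ℂ, ‖z‖ < r₁ → z ≠ 0 →
      0 < (2 * (z * deriv f z / f z) - z * deriv (deriv f) z / deriv f z).re := by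
  intro z hzr hz0
  have hz : z ∈ ball (0 : ℂ) 1 := by
    rw [mem_ball_zero_iff]
    nlinarith [pow_three_lt_two_mul_one_sub_sq (norm_nonneg z) hzr hroot, norm_nonneg z]
  have hne : ∀ w ∈ ball (0 : ℂ) 1, w ≠ 0 → f w ≠ 0 ∧ deriv f w ≠ 0 := fun w hw hw0 =>
    ne_zero_of_norm_sq_div_mul_deriv_sub_one_lt (hU w hw hw0)
  obtain ⟨W, hWd, hW0, hW'0, hWeq⟩ := exists_differentiableOn_eq_sq_div_mul_deriv_sub_one
    hf.differentiableOn hf0 hf'0 fun w hw hw0 => (hne w hw hw0).1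
  have hWmaps : Set.MapsTo W (ball 0 1) (closedBall 0 1) := by
    intro w hw
    rw [mem_closedBall_zero_iff]
    rcases eq_or_ne w 0 with rfl | hw0
    · simp [hW0]
    · exact (hWeq w hw hw0 ▸ hU w hw hw0).le
  obtain ⟨ψ, hψd, hψmaps, hWψ⟩ := exists_eq_sq_mul_of_mapsTo_ball hWd hWmaps hW0 hW'0
  have heq : (fun w => (w / f w) ^ 2 * deriv f w) =ᶠ[𝓝 z] fun w => 1 + w ^ 2 * ψ w := by
    filter_upwards [isOpen_ball.mem_nhds hz, isOpen_ne.mem_nhds hz0] with w hw hw0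
    rw [← hWψ, hWeq w hw hw0]
    ring
  rw [two_mul_sub_eq_div_of_eventuallyEq hz0 (hne z hz hz0).1 (hne z hz hz0).2
    (hf z hz).differentiableAt (hf.deriv z hz).differentiableAt
    (hψd.differentiableAt (isOpen_ball.mem_nhds hz)) heq]
  exact re_two_sub_div_pos (pow_three_lt_two_mul_one_sub_sq (norm_nonneg z) hzr hroot)
    (mem_closedBall_zero_iff.1 (hψmaps hz)) (schwarz_pick hψd hψmaps hz)

theorem U_D_re_pos (f : ℂ → ℂ) (r₁ : ℝ)
    (hr₁ : r₁ ∈ Set.Ioo (0 : ℝ) 1)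
    (hroot : r₁ ^ 3 + 2 * r₁ ^ 2 - 2 = 0)
    (hf : AnalyticOnNhd ℂ f (ball (0 : ℂ) 1))
    (hf0 : f 0 = 0) (hf'0 : deriv f 0 = 1)
    (hU : ∀ z ∈ ball (0 : ℂ) 1, z ≠ 0 →
      ‖(z / f z) ^ 2 * deriv f z - 1‖ < 1) :
    ∀ z : ℂ, ‖z‖ < r₁ → z ≠ 0 →
      0 < (2 * (z * deriv f z / f z) - z * deriv (deriv f) z / deriv f z).re :=
  U_D_re_pos_general f r₁ hroot hf hf0 hf'0 hU
end

section
/- If f is starlike of order 1/2, i.e. f analytic on 𝔻 with f(0)=0, f'(0)=1 and Re(z·f'(z)/f(z)) > 1/2 on 𝔻, then Re(2·z·f'(z)/f(z) − z·f''(z)/f'(z)) > 0 for all |z| < √((√5 − 1)/2) ≈ 0.78615. -/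
/-!
Write `z f'/f = 1 / (1 - ω)`. The condition `Re (z f'/f) > 1/2` says exactly that `|ω| < 1`, and
`f'(0) = 1` gives `ω 0 = 0`. Differentiating `f = (1 - ω) z f'` gives
`2 z f'/f - z f''/f' = 2 - (z ω' - ω) / (1 - ω)`, and Schwarz–Pick applied to `ω / z` bounds
`|z ω' - ω| ≤ (r² - |ω|²) / (1 - r²)` on `|z| = r`. As `|1 - ω| ≥ 1 - |ω|`, the quotient has
modulus `< 2` once `r² - s² < 2 (1 - s) (1 - r²)` for all `s ∈ [0, 1]`; the minimum over `s` of the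
difference is `1 - r² - r⁴`, positive exactly when `r² < (√5 - 1) / 2`.
-/

open Complex Metric Set Filter Topology ComplexConjugate

namespace Complex

noncomputable def discMobius (c w : ℂ) : ℂ := (c - w) / (1 - conj c * w)

theorem normSq_one_sub_conj_mul_sub_normSq_sub (c w : ℂ) :
    normSq (1 - conj c * w) - normSq (c - w) = (1 - normSq c) * (1 - normSq w) := by
  simp only [normSq_apply, sub_re, sub_im, mul_re, mul_im, one_re, one_im, conj_re, conj_im]
  ring

theorem one_sub_conj_mul_ne_zero {c w : ℂ} (hc : ‖c‖ < 1) (hw : ‖w‖ ≤ 1) :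
    1 - conj c * w ≠ 0 := by
  rw [sub_ne_zero]
  intro h
  have : ‖conj c * w‖ < 1 := by
    rw [norm_mul, norm_conj]
    nlinarith [norm_nonneg c, norm_nonneg w]
  simp [← h] at this

@[simp] theorem discMobius_zero (c : ℂ) : discMobius c 0 = c := by simp [discMobius]

@[simp] theorem discMobius_self (c : ℂ) : discMobius c c = 0 := by simp [discMobius]

theorem mapsTo_discMobius {c : ℂ} (hc : ‖c‖ < 1) :
    MapsTo (discMobius c) (ball 0 1) (ball 0 1) := by
  intro w hw
  rw [mem_ball_zero_iff] at hw ⊢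
  have hden := one_sub_conj_mul_ne_zero hc hw.le
  rw [discMobius, norm_div, div_lt_one (norm_pos_iff.2 hden), ← sq_lt_sq₀ (norm_nonneg _)
    (norm_nonneg _), ← normSq_eq_norm_sq, ← normSq_eq_norm_sq, ← sub_pos,
    normSq_one_sub_conj_mul_sub_normSq_sub, normSq_eq_norm_sq, normSq_eq_norm_sq]
  have := norm_nonneg c
  have := norm_nonneg w
  apply mul_pos <;> nlinarith

theorem hasDerivAt_discMobius {c w : ℂ} (hw : 1 - conj c * w ≠ 0) :
    HasDerivAt (discMobius c) ((‖c‖ ^ 2 - 1) / (1 - conj c * w) ^ 2) w := by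
  have := ((hasDerivAt_id w).const_sub c).div
    (((hasDerivAt_id w).const_mul (conj c)).const_sub 1) hw
  refine this.congr_deriv ?_
  rw [← mul_conj', id]
  ring

theorem differentiableOn_discMobius {c : ℂ} (hc : ‖c‖ < 1) :
    DifferentiableOn ℂ (discMobius c) (ball 0 1) := fun _ hw =>
  (hasDerivAt_discMobius (one_sub_conj_mul_ne_zero hc (mem_ball_zero_iff.1 hw).le))
    |>.differentiableAt.differentiableWithinAt

theorem norm_deriv_mul_le_of_mapsTo_ball {φ : ℂ → ℂ} (hd : DifferentiableOn ℂ φ (ball 0 1))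
    (hm : MapsTo φ (ball 0 1) (ball 0 1)) {a : ℂ} (ha : a ∈ ball (0 : ℂ) 1) :
    ‖deriv φ a‖ * (1 - ‖a‖ ^ 2) ≤ 1 - ‖φ a‖ ^ 2 := by
  set b := φ a
  have ha' : ‖a‖ < 1 := mem_ball_zero_iff.1 ha
  have hb' : ‖b‖ < 1 := mem_ball_zero_iff.1 (hm ha)
  set ψ := discMobius b ∘ φ ∘ discMobius a
  have hψd : DifferentiableOn ℂ ψ (ball 0 1) :=
    (differentiableOn_discMobius hb').comp (hd.comp (differentiableOn_discMobius ha')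
      (mapsTo_discMobius ha')) (hm.comp (mapsTo_discMobius ha'))
  have hψm : MapsTo ψ (ball 0 1) (closedBall (ψ 0) 1) := by
    simpa [ψ, b] using ((mapsTo_discMobius hb').comp
      (hm.comp (mapsTo_discMobius ha'))).mono_right ball_subset_closedBall
  have hσ : HasDerivAt (discMobius a) (‖a‖ ^ 2 - 1) 0 := by
    simpa using hasDerivAt_discMobius (c := a) (w := 0) (by simp)
  have hφ : HasDerivAt φ (deriv φ a) a :=
    (hd.differentiableAt (isOpen_ball.mem_nhds ha)).hasDerivAt
  have hM := hasDerivAt_discMobius (one_sub_conj_mul_ne_zero hb' hb'.le)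
  rw [conj_mul'] at hM
  have hb2 : 0 < 1 - ‖b‖ ^ 2 := by nlinarith [norm_nonneg b]
  have ha2 : 0 < 1 - ‖a‖ ^ 2 := by nlinarith [norm_nonneg a]
  have hψ' : deriv ψ 0 = (((1 - ‖a‖ ^ 2) / (1 - ‖b‖ ^ 2) : ℝ) : ℂ) * deriv φ a := by
    rw [(hM.comp_of_eq 0 (hφ.comp_of_eq 0 hσ (discMobius_zero a).symm) (by simp [b])).deriv]
    have : (1 - ‖b‖ ^ 2 : ℂ) ≠ 0 := by exact_mod_cast hb2.ne'
    push_cast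
    field_simp
    ring
  have hschwarz := norm_deriv_le_one_of_mapsTo_ball hψd hψm one_pos
  rw [hψ', norm_mul, norm_real, Real.norm_eq_abs, abs_of_pos (by positivity), div_mul_eq_mul_div,
    div_le_one hb2] at hschwarz
  linarith

theorem norm_deriv_mul_le_of_mapsTo_closedBall {φ : ℂ → ℂ}
    (hd : DifferentiableOn ℂ φ (ball 0 1)) (hm : MapsTo φ (ball 0 1) (closedBall 0 1)) {a : ℂ}
    (ha : a ∈ ball (0 : ℂ) 1) : ‖deriv φ a‖ * (1 - ‖a‖ ^ 2) ≤ 1 - ‖φ a‖ ^ 2 := by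
  by_cases h : ∃ w ∈ ball (0 : ℂ) 1, ‖φ w‖ = 1
  · obtain ⟨w, hw, hw1⟩ := h
    have hconst := eqOn_of_isPreconnected_of_isMaxOn_norm (convex_ball 0 1).isPreconnected
      isOpen_ball hd hw fun x hx => by simpa [hw1] using hm hx
    have hderiv : deriv φ a = 0 := by
      rw [(hconst.eventuallyEq_of_mem (isOpen_ball.mem_nhds ha)).deriv_eq]
      exact deriv_const a (φ w)
    rw [hderiv, hconst ha, Function.const_apply, hw1]
    simp
  · push Not at h
    exact norm_deriv_mul_le_of_mapsTo_ball hd (fun x hx => mem_ball_zero_iff.2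
      ((mem_closedBall_zero_iff.1 (hm hx)).lt_of_ne (h x hx))) ha

theorem norm_mul_deriv_sub_le_of_mapsTo_closedBall {ω : ℂ → ℂ}
    (hd : DifferentiableOn ℂ ω (ball 0 1)) (hm : MapsTo ω (ball 0 1) (closedBall 0 1))
    (h0 : ω 0 = 0) {z : ℂ} (hz : z ∈ ball (0 : ℂ) 1) :
    ‖z * deriv ω z - ω z‖ * (1 - ‖z‖ ^ 2) ≤ ‖z‖ ^ 2 - ‖ω z‖ ^ 2 := by
  set φ := dslope ω 0
  have hφd : DifferentiableOn ℂ φ (ball 0 1) :=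
    (differentiableOn_dslope (isOpen_ball.mem_nhds (mem_ball_self one_pos))).2 hd
  have hφm : MapsTo φ (ball 0 1) (closedBall 0 1) := fun w hw => mem_closedBall_zero_iff.2 <| by
    simpa using norm_dslope_le_div_of_mapsTo_ball hd (by rwa [h0]) hw
  have hωφ : ∀ w, ω w = w * φ w := fun w => by simpa [h0] using (sub_smul_dslope ω 0 w).symm
  have hderiv : deriv ω z = φ z + z * deriv φ z := by
    rw [show ω = fun w => w * φ w from funext hωφ]
    simpa using ((hasDerivAt_id' z).fun_mul
      (hφd.differentiableAt (isOpen_ball.mem_nhds hz)).hasDerivAt).deriv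
  calc ‖z * deriv ω z - ω z‖ * (1 - ‖z‖ ^ 2) = ‖z‖ ^ 2 * (‖deriv φ z‖ * (1 - ‖z‖ ^ 2)) := by
        rw [hderiv, hωφ z, show z * (φ z + z * deriv φ z) - z * φ z = z ^ 2 * deriv φ z by ring,
          norm_mul, norm_pow]
        ring
    _ ≤ ‖z‖ ^ 2 * (1 - ‖φ z‖ ^ 2) := by
        gcongr
        exact norm_deriv_mul_le_of_mapsTo_closedBall hφd hφm hz
    _ = ‖z‖ ^ 2 - ‖ω z‖ ^ 2 := by rw [hωφ z, norm_mul]; ring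

end Complex

theorem norm_one_sub_inv_lt_one {p : ℂ} (hp : 1 / 2 < p.re) : ‖1 - p⁻¹‖ < 1 := by
  have hp0 : p ≠ 0 := by rintro rfl; norm_num at hp
  have hlt : normSq (p - 1) < normSq p := by
    simp only [normSq_apply, sub_re, sub_im, one_re, one_im]
    nlinarith
  rw [normSq_eq_norm_sq, normSq_eq_norm_sq, sq_lt_sq₀ (norm_nonneg _) (norm_nonneg _)] at hlt
  rwa [show 1 - p⁻¹ = (p - 1) / p by field_simp, norm_div, div_lt_one (norm_pos_iff.2 hp0)]

structure IsSchwarzFunction (ω : ℂ → ℂ) : Prop where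
  differentiableOn : DifferentiableOn ℂ ω (ball 0 1)
  mapsTo : MapsTo ω (ball 0 1) (ball 0 1)
  map_zero : ω 0 = 0

theorem deriv_ne_zero_of_half_lt_re {f : ℂ → ℂ} (hf'0 : deriv f 0 = 1)
    (hst : ∀ z ∈ ball (0 : ℂ) 1, z ≠ 0 → 1 / 2 < (z * deriv f z / f z).re) {z : ℂ}
    (hz : z ∈ ball (0 : ℂ) 1) : deriv f z ≠ 0 := by
  rcases eq_or_ne z 0 with rfl | hz0
  · simp [hf'0]
  · intro h
    have := hst z hz hz0
    norm_num [h] at this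

theorem exists_isSchwarzFunction_of_half_lt_re {f : ℂ → ℂ} (hf : AnalyticOnNhd ℂ f (ball 0 1))
    (hf0 : f 0 = 0) (hf'0 : deriv f 0 = 1)
    (hst : ∀ z ∈ ball (0 : ℂ) 1, z ≠ 0 → 1 / 2 < (z * deriv f z / f z).re) :
    ∃ ω, IsSchwarzFunction ω ∧ ∀ z ∈ ball (0 : ℂ) 1, f z = (1 - ω z) * (z * deriv f z) := by
  have hf' := fun z (hz : z ∈ ball (0 : ℂ) 1) => deriv_ne_zero_of_half_lt_re hf'0 hst hz
  set g := dslope f 0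
  have hfg : ∀ z, f z = z * g z := fun z => by simpa [hf0] using (sub_smul_dslope f 0 z).symm
  refine ⟨fun z => 1 - g z / deriv f z, ⟨?_, fun z hz => ?_, ?_⟩, fun z hz => ?_⟩
  · exact (differentiableOn_const 1).sub <| ((differentiableOn_dslope
      (isOpen_ball.mem_nhds (mem_ball_self one_pos))).2 hf.differentiableOn).div
      hf.deriv.differentiableOn hf'
  · rw [mem_ball_zero_iff]
    rcases eq_or_ne z 0 with rfl | hz0
    · simp [g, hf'0]
    · have := norm_one_sub_inv_lt_one (hst z hz hz0)
      rwa [hfg z, inv_div, mul_div_mul_left _ _ hz0] at this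
  · simp [g, hf'0]
  · rw [hfg z, sub_sub_cancel]
    field_simp [hf' z hz]

theorem two_mul_div_sub_div_eq_two_sub_div {f ω : ℂ → ℂ} {z : ℂ} (hz : z ≠ 0)
    (hω : DifferentiableAt ℂ ω z) (hf' : DifferentiableAt ℂ (deriv f) z) (hf'z : deriv f z ≠ 0)
    (hωz : ω z ≠ 1) (hfω : f =ᶠ[𝓝 z] fun w => (1 - ω w) * (w * deriv f w)) :
    2 * (z * deriv f z / f z) - z * deriv (deriv f) z / deriv f z =
      2 - (z * deriv ω z - ω z) / (1 - ω z) := by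
  have hderiv : deriv f z = -deriv ω z * (z * deriv f z) +
      (1 - ω z) * (1 * deriv f z + z * deriv (deriv f) z) :=
    ((hω.hasDerivAt.const_sub 1).fun_mul ((hasDerivAt_id' z).fun_mul hf'.hasDerivAt)
      |>.congr_of_eventuallyEq hfω).deriv
  have hωz' : 1 - ω z ≠ 0 := sub_ne_zero.2 hωz.symm
  rw [hfω.self_of_nhds]
  field_simp
  linear_combination hderiv

theorem norm_div_one_sub_lt_two {a w : ℂ} {r : ℝ} (hr : r ^ 4 + r ^ 2 < 1) (hw : ‖w‖ < 1)
    (ha : ‖a‖ * (1 - r ^ 2) ≤ r ^ 2 - ‖w‖ ^ 2) : ‖a / (1 - w)‖ < 2 := by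
  have hr2 : 0 < 1 - r ^ 2 := by nlinarith [sq_nonneg (r ^ 2)]
  have hw1 : 1 - ‖w‖ ≤ ‖1 - w‖ := by simpa using norm_sub_norm_le (1 : ℂ) w
  have hpos : 0 < 1 - ‖w‖ := by linarith
  -- the difference of the two sides is `(‖w‖ - (1 - r²))² + 1 - r² - r⁴`
  have key : r ^ 2 - ‖w‖ ^ 2 < 2 * (1 - ‖w‖) * (1 - r ^ 2) := by
    nlinarith [sq_nonneg (‖w‖ - (1 - r ^ 2))]
  rw [norm_div, div_lt_iff₀ (hpos.trans_le hw1)]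
  have : ‖a‖ < 2 * (1 - ‖w‖) := by nlinarith
  linarith

theorem pow_four_add_sq_lt_one {r : ℝ} (hr0 : 0 ≤ r) (hr : r < √((√5 - 1) / 2)) :
    r ^ 4 + r ^ 2 < 1 := by
  rw [Real.lt_sqrt hr0] at hr
  have h5 : √5 ^ 2 = 5 := Real.sq_sqrt (by norm_num)
  nlinarith [sq_nonneg r, Real.sqrt_nonneg 5]

theorem starlike_half_D_re_pos (f : ℂ → ℂ)
    (hf : AnalyticOnNhd ℂ f (ball (0 : ℂ) 1))
    (hf0 : f 0 = 0) (hf'0 : deriv f 0 = 1)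
    (hst : ∀ z ∈ ball (0 : ℂ) 1, z ≠ 0 → 1 / 2 < (z * deriv f z / f z).re) :
    ∀ z : ℂ, ‖z‖ < Real.sqrt ((Real.sqrt 5 - 1) / 2) → z ≠ 0 →
      0 < (2 * (z * deriv f z / f z) - z * deriv (deriv f) z / deriv f z).re := by
  intro z hz hz0
  obtain ⟨ω, hω, hfω⟩ := exists_isSchwarzFunction_of_half_lt_re hf hf0 hf'0 hst
  have hr := pow_four_add_sq_lt_one (norm_nonneg z) hz
  have hzball : z ∈ ball (0 : ℂ) 1 := mem_ball_zero_iff.2 (by nlinarith [norm_nonneg z])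
  have hnhds : ball (0 : ℂ) 1 ∈ 𝓝 z := isOpen_ball.mem_nhds hzball
  have hωz : ‖ω z‖ < 1 := mem_ball_zero_iff.1 (hω.mapsTo hzball)
  rw [two_mul_div_sub_div_eq_two_sub_div hz0 (hω.differentiableOn.differentiableAt hnhds)
    (hf.deriv z hzball).differentiableAt (deriv_ne_zero_of_half_lt_re hf'0 hst hzball)
    (fun h => by simp [h] at hωz) (eventually_of_mem hnhds hfω)]
  have hbound := norm_div_one_sub_lt_two hr hωz <|
    norm_mul_deriv_sub_le_of_mapsTo_closedBall hω.differentiableOn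
      (hω.mapsTo.mono_right ball_subset_closedBall) hω.map_zero hzball
  rw [sub_re, re_ofNat]
  linarith [re_le_norm ((z * deriv ω z - ω z) / (1 - ω z))]
end

section
/- If f ∈ 𝒢, i.e. f analytic on 𝔻 with f(0)=0, f'(0)=1 and Re(1 + z·f''(z)/f'(z)) < 3/2 on 𝔻, and if z·f'(z)/f(z) = (1 − ω(z))/(1 − ω(z)/2) for some analytic ω with ω(0)=0, |ω| < 1, then Re(2·z·f'(z)/f(z) − z·f''(z)/f'(z)) > 0 for all |z| < 2/3. -/
/-!
By the Schwarz lemma `w = ω z` has `‖w‖ ≤ ‖z‖ < 2/3`, and writing `(1 - w) / (1 - w/2) = 1 - w / (2 - w)` one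
gets `Re (z f'/f) ≥ 1 - ‖w‖ / (2 - ‖w‖) > 1/2`. The defining condition of `𝒢` says
`Re (z f''/f') < 1/2`, so `Re (2 z f'/f - z f''/f') > 2 · 1/2 - 1/2 > 0`.
-/

open Complex Metric

lemma one_sub_norm_div_two_sub_norm_le_re {w : ℂ} (hw : ‖w‖ < 2) :
    1 - ‖w‖ / (2 - ‖w‖) ≤ ((1 - w) / (1 - w / 2)).re := by
  have h2w : 2 - ‖w‖ ≤ ‖(2 : ℂ) - w‖ := by
    simpa using norm_sub_norm_le (2 : ℂ) w
  have h2w_ne : (2 : ℂ) - w ≠ 0 := norm_pos_iff.mp (by linarith)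
  have hsplit : (1 - w) / (1 - w / 2) = 1 - w / (2 - w) := by
    field_simp
    ring
  have hbound : (w / (2 - w)).re ≤ ‖w‖ / (2 - ‖w‖) :=
    calc (w / (2 - w)).re ≤ ‖w / (2 - w)‖ := re_le_norm _
      _ = ‖w‖ / ‖(2 : ℂ) - w‖ := norm_div _ _
      _ ≤ ‖w‖ / (2 - ‖w‖) := div_le_div_of_nonneg_left (norm_nonneg _) (by linarith) h2w
  rw [hsplit, sub_re, one_re]
  linarith

lemma half_lt_re_of_norm_lt {w : ℂ} (hw : ‖w‖ < 2 / 3) :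
    1 / 2 < ((1 - w) / (1 - w / 2)).re := by
  have hlt : ‖w‖ / (2 - ‖w‖) < 1 / 2 := by
    rw [div_lt_div_iff₀ (by linarith) (by norm_num)]
    linarith
  linarith [one_sub_norm_div_two_sub_norm_le_re (w := w) (by linarith)]

theorem G_D_re_pos_general (f ω : ℂ → ℂ)
    (hG : ∀ z ∈ ball (0 : ℂ) 1,
      (1 + z * deriv (deriv f) z / deriv f z).re < 3 / 2)
    (hω : AnalyticOnNhd ℂ ω (ball (0 : ℂ) 1))
    (hω0 : ω 0 = 0)
    (hω1 : ∀ z ∈ ball (0 : ℂ) 1, ‖ω z‖ < 1)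
    (hrep : ∀ z ∈ ball (0 : ℂ) 1, z ≠ 0 →
      z * deriv f z / f z = (1 - ω z) / (1 - ω z / 2)) :
    ∀ z : ℂ, ‖z‖ < 2 / 3 → z ≠ 0 →
      0 < (2 * (z * deriv f z / f z) - z * deriv (deriv f) z / deriv f z).re := by
  intro z hz hz0
  have hz1 : z ∈ ball (0 : ℂ) 1 := mem_ball_zero_iff.mpr (by linarith)
  have hschwarz : ‖ω z‖ ≤ ‖z‖ :=
    norm_le_norm_of_mapsTo_ball hω.differentiableOn
      (fun x hx ↦ mem_closedBall_zero_iff.mpr (hω1 x hx).le) hω0 (mem_ball_zero_iff.mp hz1)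
  have hp : 1 / 2 < (z * deriv f z / f z).re := by
    rw [hrep z hz1 hz0]
    exact half_lt_re_of_norm_lt (hschwarz.trans_lt hz)
  have hq : (z * deriv (deriv f) z / deriv f z).re < 1 / 2 := by
    have := hG z hz1
    rw [add_re, one_re] at this
    linarith
  simp only [sub_re, mul_re, re_ofNat, im_ofNat, zero_mul, sub_zero]
  linarith

theorem G_D_re_pos (f ω : ℂ → ℂ)
    (hf : AnalyticOnNhd ℂ f (ball (0 : ℂ) 1))
    (hf0 : f 0 = 0) (hf'0 : deriv f 0 = 1)
    (hG : ∀ z ∈ ball (0 : ℂ) 1,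
      (1 + z * deriv (deriv f) z / deriv f z).re < 3 / 2)
    (hω : AnalyticOnNhd ℂ ω (ball (0 : ℂ) 1))
    (hω0 : ω 0 = 0)
    (hω1 : ∀ z ∈ ball (0 : ℂ) 1, ‖ω z‖ < 1)
    (hrep : ∀ z ∈ ball (0 : ℂ) 1, z ≠ 0 →
      z * deriv f z / f z = (1 - ω z) / (1 - ω z / 2)) :
    ∀ z : ℂ, ‖z‖ < 2 / 3 → z ≠ 0 →
      0 < (2 * (z * deriv f z / f z) - z * deriv (deriv f) z / deriv f z).re :=
  G_D_re_pos_general f ω hG hω hω0 hω1 hrep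
end

section
/- If f is starlike, i.e. f analytic on 𝔻 with f(0)=0, f'(0)=1 and Re(z·f'(z)/f(z)) > 0 on 𝔻, then Re(2·z·f'(z)/f(z) − z·f''(z)/f'(z)) > 0 for all |z| < 1/2. -/
open Complex ComplexConjugate Metric Set Topology

/-!
Put `p(z) = z f'(z) / f(z)`, extended by `p(0) = 1`; it is holomorphic on the disc with positive
real part, and `2 z f'/f - z f''/f' = p + 1 - z p'/p`. The Schwarz lemma applied to the Cayley
transform `(p - 1) / (p + 1)` gives `(1 - r) ≤ (1 + r) Re p(z)`, and applied to
`(p - p(z)) / (p + conj p(z))` precomposed with the disc automorphism sending `0` to `z` it gives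
`|p'(z)| (1 - r²) ≤ 2 Re p(z)`, where `r = |z|`. Since `Re p ≤ |p|`, these combine to
`Re (p + 1 - z p'/p) ≥ 2 / (1 + r) - 2 r / (1 - r²) = 2 (1 - 2r) / (1 - r²)`,
which is positive for `r < 1/2`.
-/

theorem norm_sub_lt_norm_add_conj {a w : ℂ} (ha : 0 < a.re) (hw : 0 < w.re) :
    ‖w - a‖ < ‖w + conj a‖ := by
  refine lt_of_pow_lt_pow_left₀ 2 (norm_nonneg _) ?_
  simp only [Complex.sq_norm, normSq_apply, sub_re, sub_im, add_re, add_im, conj_re, conj_im]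
  nlinarith

theorem mapsTo_ball_cayley {s : Set ℂ} {p : ℂ → ℂ} {c : ℂ} (hc : 0 < c.re)
    (hp : ∀ w ∈ s, 0 < (p w).re) :
    MapsTo (fun w ↦ (p w - c) / (p w + conj c)) s (ball 0 1) := by
  intro w hw
  have h := norm_sub_lt_norm_add_conj hc (hp w hw)
  rwa [mem_ball_zero_iff, norm_div, div_lt_one ((norm_nonneg _).trans_lt h)]

theorem differentiableOn_cayley {s : Set ℂ} {p : ℂ → ℂ} {c : ℂ} (hc : 0 < c.re)
    (hd : DifferentiableOn ℂ p s) (hp : ∀ w ∈ s, 0 < (p w).re) :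
    DifferentiableOn ℂ (fun w ↦ (p w - c) / (p w + conj c)) s :=
  (hd.sub_const c).div (hd.add_const _) fun w hw ↦
    norm_pos_iff.mp ((norm_nonneg _).trans_lt (norm_sub_lt_norm_add_conj hc (hp w hw)))

noncomputable def diskMobius (z u : ℂ) : ℂ := (u + z) / (1 + conj z * u)

theorem normSq_one_add_conj_mul_sub_normSq_add (z u : ℂ) :
    normSq (1 + conj z * u) - normSq (u + z) = (1 - normSq z) * (1 - normSq u) := by
  simp only [normSq_apply, add_re, add_im, mul_re, mul_im, one_re, one_im, conj_re, conj_im]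
  ring

theorem norm_add_lt_norm_one_add_conj_mul {z u : ℂ} (hz : ‖z‖ < 1) (hu : ‖u‖ < 1) :
    ‖u + z‖ < ‖1 + conj z * u‖ := by
  refine lt_of_pow_lt_pow_left₀ 2 (norm_nonneg _) ?_
  have hz2 : normSq z < 1 := by rw [← Complex.sq_norm]; nlinarith [norm_nonneg z]
  have hu2 : normSq u < 1 := by rw [← Complex.sq_norm]; nlinarith [norm_nonneg u]
  rw [Complex.sq_norm, Complex.sq_norm, ← sub_pos, normSq_one_add_conj_mul_sub_normSq_add]
  nlinarith

theorem mapsTo_diskMobius {z : ℂ} (hz : ‖z‖ < 1) :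
    MapsTo (diskMobius z) (ball 0 1) (ball 0 1) := by
  intro u hu
  rw [mem_ball_zero_iff] at hu ⊢
  have h := norm_add_lt_norm_one_add_conj_mul hz hu
  rwa [diskMobius, norm_div, div_lt_one ((norm_nonneg _).trans_lt h)]

theorem one_add_conj_mul_ne_zero {z u : ℂ} (hz : ‖z‖ < 1) (hu : ‖u‖ < 1) : 1 + conj z * u ≠ 0 :=
  norm_pos_iff.mp ((norm_nonneg _).trans_lt (norm_add_lt_norm_one_add_conj_mul hz hu))

theorem differentiableOn_diskMobius {z : ℂ} (hz : ‖z‖ < 1) :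
    DifferentiableOn ℂ (diskMobius z) (ball 0 1) :=
  (differentiableOn_id.add_const z).div ((differentiableOn_id.const_mul _).const_add 1)
    fun _ hu ↦ one_add_conj_mul_ne_zero hz (mem_ball_zero_iff.mp hu)

theorem diskMobius_zero (z : ℂ) : diskMobius z 0 = z := by simp [diskMobius]

theorem hasDerivAt_diskMobius_zero (z : ℂ) :
    HasDerivAt (diskMobius z) ((1 - ‖z‖ ^ 2 : ℝ) : ℂ) 0 := by
  have h := ((hasDerivAt_id' (0 : ℂ)).add_const z).fun_div
    (((hasDerivAt_id' (0 : ℂ)).const_mul (conj z)).const_add 1) (by simp)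
  refine h.congr_deriv ?_
  rw [ofReal_sub, ofReal_one, ofReal_pow, ← Complex.mul_conj']
  ring

theorem norm_deriv_mul_one_sub_sq_le_one {h : ℂ → ℂ} {z : ℂ}
    (hd : DifferentiableOn ℂ h (ball 0 1)) (hmaps : MapsTo h (ball 0 1) (ball 0 1))
    (hz : ‖z‖ < 1) (hhz : h z = 0) :
    ‖deriv h z‖ * (1 - ‖z‖ ^ 2) ≤ 1 := by
  have hzb : z ∈ ball (0 : ℂ) 1 := mem_ball_zero_iff.mpr hz
  have hcomp : HasDerivAt (h ∘ diskMobius z) (deriv h z * ((1 - ‖z‖ ^ 2 : ℝ) : ℂ)) 0 :=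
    (hd.differentiableAt (isOpen_ball.mem_nhds hzb)).hasDerivAt.comp_of_eq 0
      (hasDerivAt_diskMobius_zero z) (diskMobius_zero z).symm
  have hcomp_maps :
      MapsTo (h ∘ diskMobius z) (ball 0 1) (closedBall ((h ∘ diskMobius z) 0) 1) := by
    rw [Function.comp_apply, diskMobius_zero, hhz]
    exact (hmaps.comp (mapsTo_diskMobius hz)).mono_right ball_subset_closedBall
  have hschwarz := norm_deriv_le_one_of_mapsTo_ball
    (hd.comp (differentiableOn_diskMobius hz) (mapsTo_diskMobius hz)) hcomp_maps one_pos
  rwa [hcomp.deriv, norm_mul, norm_real, Real.norm_of_nonneg (by nlinarith [norm_nonneg z])]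
    at hschwarz

theorem one_sub_le_mul_re_of_norm_sub_one_le {c : ℂ} {r : ℝ} (hc : 0 < c.re)
    (h : ‖c - 1‖ ≤ r * ‖c + 1‖) : 1 - r ≤ (1 + r) * c.re := by
  have hr0 : 0 ≤ r := nonneg_of_mul_nonneg_left ((norm_nonneg _).trans h)
    ((by simp only [add_re, one_re]; linarith : 0 < (c + 1).re).trans_le (re_le_norm _))
  have hsq : normSq (c - 1) ≤ r ^ 2 * normSq (c + 1) := by
    rw [← Complex.sq_norm, ← Complex.sq_norm, ← mul_pow]
    exact pow_le_pow_left₀ (norm_nonneg _) h 2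
  simp only [normSq_apply, sub_re, sub_im, add_re, add_im, one_re, one_im] at hsq
  by_contra! hlt
  have hsq_lt := mul_self_lt_mul_self (by positivity) (by linarith : r * (1 + c.re) < 1 - c.re)
  nlinarith [mul_le_mul_of_nonneg_right (by nlinarith : r ^ 2 ≤ 1) (sq_nonneg c.im)]

section Caratheodory

variable {p : ℂ → ℂ} (hd : DifferentiableOn ℂ p (ball 0 1))
  (hre : ∀ w ∈ ball (0 : ℂ) 1, 0 < (p w).re)
include hd hre

theorem one_sub_norm_le_mul_re (hp0 : p 0 = 1) {z : ℂ} (hz : ‖z‖ < 1) :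
    1 - ‖z‖ ≤ (1 + ‖z‖) * (p z).re := by
  have hc : 0 < (1 : ℂ).re := by simp
  have hschwarz := norm_le_norm_of_mapsTo_ball (differentiableOn_cayley hc hd hre)
    ((mapsTo_ball_cayley hc hre).mono_right ball_subset_closedBall) (by simp [hp0]) hz
  have hpos : 0 < ‖p z + conj 1‖ := (norm_nonneg _).trans_lt
    (norm_sub_lt_norm_add_conj hc (hre z (mem_ball_zero_iff.mpr hz)))
  rw [norm_div, div_le_iff₀ hpos, map_one] at hschwarz
  exact one_sub_le_mul_re_of_norm_sub_one_le (hre z (mem_ball_zero_iff.mpr hz)) hschwarz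

theorem norm_deriv_mul_le_two_mul_re {z : ℂ} (hz : ‖z‖ < 1) :
    ‖deriv p z‖ * (1 - ‖z‖ ^ 2) ≤ 2 * (p z).re := by
  have hzb : z ∈ ball (0 : ℂ) 1 := mem_ball_zero_iff.mpr hz
  set c := p z with hc_def
  have hc : 0 < c.re := hre z hzb
  have hden : c + conj c ≠ 0 := by
    rw [add_conj, ofReal_ne_zero]; positivity
  have hderiv :
      HasDerivAt (fun w ↦ (p w - c) / (p w + conj c)) (deriv p z / (c + conj c)) z := by
    have hp' := (hd.differentiableAt (isOpen_ball.mem_nhds hzb)).hasDerivAt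
    refine ((hp'.sub_const c).fun_div (hp'.add_const (conj c)) hden).congr_deriv ?_
    rw [← hc_def]
    field_simp
    ring
  have hpick := norm_deriv_mul_one_sub_sq_le_one (differentiableOn_cayley hc hd hre)
    (mapsTo_ball_cayley hc hre) hz (by simp [c])
  rw [hderiv.deriv, norm_div, add_conj, norm_real, Real.norm_of_nonneg (by positivity),
    div_mul_eq_mul_div, div_le_one (by positivity)] at hpick
  exact hpick

theorem two_mul_one_sub_two_mul_div_le_re (hp0 : p 0 = 1) {z : ℂ} (hz : ‖z‖ < 1) :
    2 * (1 - 2 * ‖z‖) / (1 - ‖z‖ ^ 2) ≤ (p z + 1 - z * deriv p z / p z).re := by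
  set r := ‖z‖
  have hc : 0 < (p z).re := hre z (mem_ball_zero_iff.mpr hz)
  have hnorm : 0 < ‖p z‖ := hc.trans_le (re_le_norm _)
  have hlower := one_sub_norm_le_mul_re hd hre hp0 hz
  have hderiv := norm_deriv_mul_le_two_mul_re hd hre hz
  have hquot : (z * deriv p z / p z).re ≤ r * ‖deriv p z‖ / ‖p z‖ := by
    simpa only [norm_div, norm_mul] using re_le_norm (z * deriv p z / p z)
  have h1r : 0 < 1 - r ^ 2 := by nlinarith [norm_nonneg z]
  have hquot' : r * ‖deriv p z‖ / ‖p z‖ ≤ 2 * r / (1 - r ^ 2) := by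
    rw [div_le_div_iff₀ hnorm h1r]
    nlinarith [re_le_norm (p z), norm_nonneg z]
  have hsum : 2 * (1 - 2 * r) / (1 - r ^ 2) = 2 / (1 + r) - 2 * r / (1 - r ^ 2) := by
    have : 1 + r ≠ 0 := by positivity
    field_simp [h1r.ne']
    ring
  have hre1 : 2 / (1 + r) ≤ (p z).re + 1 := by
    rw [div_le_iff₀ (by positivity)]
    linarith
  simp only [sub_re, add_re, one_re]
  linarith

end Caratheodory

theorem dslope_zero_of_ne {f : ℂ → ℂ} (hf0 : f 0 = 0) {w : ℂ} (hw : w ≠ 0) :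
    dslope f 0 w = f w / w := by
  rw [dslope_of_ne _ hw, slope_def_field, hf0, sub_zero, sub_zero]

theorem add_one_sub_mul_deriv_div_eq {f p : ℂ → ℂ} {z : ℂ}
    (hpf : p =ᶠ[𝓝 z] fun w ↦ w * deriv f w / f w) (hf : DifferentiableAt ℂ f z)
    (hf' : DifferentiableAt ℂ (deriv f) z) (hz : z ≠ 0) (hfz : f z ≠ 0) (hf'z : deriv f z ≠ 0) :
    p z + 1 - z * deriv p z / p z =
      2 * (z * deriv f z / f z) - z * deriv (deriv f) z / deriv f z := by
  have hderiv := ((hasDerivAt_id' z).fun_mul hf'.hasDerivAt).fun_div hf.hasDerivAt hfz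
  rw [hpf.deriv_eq, hderiv.deriv, hpf.eq_of_nhds]
  field_simp
  ring

theorem starlike_D_re_pos (f : ℂ → ℂ)
    (hf : AnalyticOnNhd ℂ f (ball (0 : ℂ) 1))
    (hf0 : f 0 = 0) (hf'0 : deriv f 0 = 1)
    (hst : ∀ z ∈ ball (0 : ℂ) 1, z ≠ 0 → 0 < (z * deriv f z / f z).re) :
    ∀ z : ℂ, ‖z‖ < 1 / 2 → z ≠ 0 →
      0 < (2 * (z * deriv f z / f z) - z * deriv (deriv f) z / deriv f z).re := by
  intro z hz hz0
  -- `dslope f 0` is `f w / w` with its removable singularity at `0` filled in.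
  set p : ℂ → ℂ := fun w ↦ deriv f w / dslope f 0 w with hp_def
  have hp_eq : ∀ w ≠ 0, p w = w * deriv f w / f w := fun w hw ↦ by
    simp only [hp_def]
    rw [dslope_zero_of_ne hf0 hw, div_div_eq_mul_div, mul_comm]
  have hp0 : p 0 = 1 := by simp [hp_def, dslope_same, hf'0]
  have hre : ∀ w ∈ ball (0 : ℂ) 1, 0 < (p w).re := by
    intro w hw
    rcases eq_or_ne w 0 with rfl | hw0
    · simp [hp0]
    · exact hp_eq w hw0 ▸ hst w hw hw0
  have hslope : DifferentiableOn ℂ (dslope f 0) (ball 0 1) :=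
    (differentiableOn_dslope (isOpen_ball.mem_nhds (mem_ball_self one_pos))).mpr
      hf.differentiableOn
  have hd : DifferentiableOn ℂ p (ball 0 1) :=
    hf.deriv.differentiableOn.div hslope fun w hw hw' ↦ by simpa [hp_def, hw'] using hre w hw
  have hz1 : ‖z‖ < 1 := by linarith
  have hzb : z ∈ ball (0 : ℂ) 1 := mem_ball_zero_iff.mpr hz1
  have hfz : f z ≠ 0 := fun h ↦ by simpa [h] using hst z hzb hz0
  have hf'z : deriv f z ≠ 0 := fun h ↦ by simpa [h] using hst z hzb hz0
  rw [← add_one_sub_mul_deriv_div_eq ((eventually_ne_nhds hz0).mono hp_eq)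
    (hf z hzb).differentiableAt (hf.deriv z hzb).differentiableAt hz0 hfz hf'z]
  refine lt_of_lt_of_le ?_ (two_mul_one_sub_two_mul_div_le_re hd hre hp0 hz1)
  have : ‖z‖ ^ 2 < 1 := by nlinarith [norm_nonneg z]
  apply div_pos <;> linarith
end
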